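/- Let T = (S, Σ, κ) be a stochastic transition system, B ∈ Σ, and μ an initial probability distribution on (S, Σ). If T is decisive with respect to B, then lim_{n→∞} (p^Yes_n + p^No_n) = 1, where p^Yes_n = Prob_μ(F^{≤n} B) and p^No_n = Prob_μ((S ∖ B) U^{≤n} B̃). -/

import Mathlib

open MeasureTheory ProbabilityTheory Filter Set ENNReal

namespace STS

variable {S : Type*} [MeasurableSpace S]

/-- The finite-dimensional distributions of the Markov chain with initial distribution `μ`
and transition kernel `κ`: `finDist κ μ n` is the joint law of the first `n+1` states. -/
noncomputable def finDist (κ : Kernel S S) (μ : Measure S) : (n : ℕ) → Measure (Fin (n + 1) → S)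
  | 0 => μ.map (fun s => fun _ => s)
  | n + 1 => (finDist κ μ n).bind (fun x => (κ (x (Fin.last n))).map (Fin.snoc x))

/-- `P` assigns to each initial probability distribution `μ` the probability measure `Prob_μ`
on the space of runs `ℕ → S` (given by the Ionescu–Tulcea theorem), i.e. the unique probability
measure under which the coordinate process is a Markov chain with initial distribution `μ` and
transition kernel `κ`.  This is characterized by the finite-dimensional distributions. -/
def IsMarkovMeasureFamily (κ : Kernel S S) (P : Measure S → Measure (ℕ → S)) : Prop :=
  ∀ μ : Measure S, IsProbabilityMeasure μ →
    IsProbabilityMeasure (P μ) ∧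
    ∀ n : ℕ, (P μ).map (fun ω (i : Fin (n + 1)) => ω i.1) = finDist κ μ n

/-- `F B`: the set of runs that visit `B` at some point. -/
def FEv (B : Set S) : Set (ℕ → S) := {ω | ∃ k, ω k ∈ B}

/-- `F^{≤n} B`: the set of runs that visit `B` within `n` steps. -/
def FLe (n : ℕ) (B : Set S) : Set (ℕ → S) := {ω | ∃ k ≤ n, ω k ∈ B}

/-- `B' U B`: runs that stay in `B'` until a first visit to `B`. -/
def Until (B' B : Set S) : Set (ℕ → S) := {ω | ∃ k, ω k ∈ B ∧ ∀ j < k, ω j ∈ B'}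

/-- `B' U^{≤n} B`: runs that stay in `B'` until a first visit to `B`, within `n` steps. -/
def UntilLe (n : ℕ) (B' B : Set S) : Set (ℕ → S) :=
  {ω | ∃ k ≤ n, ω k ∈ B ∧ ∀ j < k, ω j ∈ B'}

/-- `G B`: runs that always stay in `B`. -/
def Glob (B : Set S) : Set (ℕ → S) := {ω | ∀ k, ω k ∈ B}

/-- `GF B`: runs that visit `B` infinitely often. -/
def GlobFEv (B : Set S) : Set (ℕ → S) := {ω | ∀ n : ℕ, ∃ k ≥ n, ω k ∈ B}

/-- The avoid-set `B̃` of `B`: states from which `B` is reached with probability `0`. -/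
def avoidSet (P : Measure S → Measure (ℕ → S)) (B : Set S) : Set S :=
  {s : S | P (Measure.dirac s) (FEv B) = 0}

/-- The STS is decisive w.r.t. `B`: from any initial distribution, almost surely either `B` or
its avoid-set `B̃` is eventually visited. -/
def Decisive (P : Measure S → Measure (ℕ → S)) (B : Set S) : Prop :=
  ∀ μ : Measure S, IsProbabilityMeasure μ → P μ (FEv B ∪ FEv (avoidSet P B)) = 1

/-- `A` is an attractor: it is reached almost surely from any initial distribution. -/
def IsAttractor (P : Measure S → Measure (ℕ → S)) (A : Set S) : Prop :=
  ∀ μ : Measure S, IsProbabilityMeasure μ → P μ (FEv A) = 1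

/-! Decisiveness makes `F B ∪ (Bᶜ U B̃)` almost sure, and this event is the increasing union of
`F^{≤n} B ∪ (Bᶜ U^{≤n} B̃)`, so by continuity from below the probabilities of these unions tend
to `1`. It remains to see that the two events are almost surely disjoint: a run in both visits
`B̃` at some time `a` and `B` at a later time `a + m`. By the Markov property this has probability
`∫ 1_{B̃}(ω a) · (κᵐ 1_B)(ω a)`, and `(κᵐ 1_B)(s) = Prob_{δ_s}(ω m ∈ B) ≤ Prob_{δ_s}(F B) = 0` for
`s ∈ B̃`. -/

lemma measurable_snoc (n : ℕ) :
    Measurable fun p : (Fin (n + 1) → S) × S => (Fin.snoc p.1 p.2 : Fin (n + 2) → S) := by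
  refine measurable_pi_lambda _ fun i => Fin.lastCases ?_ (fun j => ?_) i
  · simpa only [Fin.snoc_last] using measurable_snd
  · simp only [Fin.snoc_castSucc]
    exact (measurable_pi_apply j).comp measurable_fst

lemma measurable_snoc_right (n : ℕ) (x : Fin (n + 1) → S) :
    Measurable (Fin.snoc (α := fun _ => S) x) :=
  (measurable_snoc n).comp (measurable_const.prodMk measurable_id)

lemma measurable_map_snoc (κ : Kernel S S) [IsSFiniteKernel κ] (n : ℕ) :
    Measurable fun x : Fin (n + 1) → S =>
      (κ (x (Fin.last n))).map (Fin.snoc (α := fun _ => S) x) := by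
  refine Measure.measurable_of_measurable_coe _ fun A hA => ?_
  simp_rw [Measure.map_apply (measurable_snoc_right n _) hA]
  exact Kernel.measurable_kernel_prodMk_left
    (κ := κ.comap (· (Fin.last n)) (measurable_pi_apply _)) (measurable_snoc n hA)

lemma lintegral_finDist_succ (κ : Kernel S S) [IsSFiniteKernel κ] (μ : Measure S) (n : ℕ)
    {f : (Fin (n + 2) → S) → ℝ≥0∞} (hf : Measurable f) :
    ∫⁻ x, f x ∂finDist κ μ (n + 1) =
      ∫⁻ x, ∫⁻ s, f (Fin.snoc x s) ∂κ (x (Fin.last n)) ∂finDist κ μ n := by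
  rw [finDist, Measure.lintegral_bind (measurable_map_snoc κ n).aemeasurable hf.aemeasurable]
  exact lintegral_congr fun x => lintegral_map hf (measurable_snoc_right n x)

noncomputable def markovOp (κ : Kernel S S) (g : S → ℝ≥0∞) : S → ℝ≥0∞ :=
  fun s => ∫⁻ t, g t ∂κ s

lemma measurable_markovOp_iterate (κ : Kernel S S) [IsSFiniteKernel κ] (m : ℕ) {g : S → ℝ≥0∞}
    (hg : Measurable g) : Measurable ((markovOp κ)^[m] g) := by
  induction m generalizing g with
  | zero => exact hg
  | succ m ih => exact ih hg.lintegral_kernel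

section MarkovProperty

variable {κ : Kernel S S} {P : Measure S → Measure (ℕ → S)} {μ : Measure S}

lemma lintegral_comp_prefix_eq_lintegral_finDist (hP : IsMarkovMeasureFamily κ P)
    (hμ : IsProbabilityMeasure μ) (n : ℕ) {F : (Fin (n + 1) → S) → ℝ≥0∞} (hF : Measurable F) :
    ∫⁻ ω, F (fun i => ω i) ∂P μ = ∫⁻ x, F x ∂finDist κ μ n := by
  rw [← (hP μ hμ).2 n, lintegral_map hF (measurable_pi_lambda _ fun i => measurable_pi_apply _)]

lemma lintegral_comp_eval_zero (hP : IsMarkovMeasureFamily κ P) (hμ : IsProbabilityMeasure μ)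
    {f : S → ℝ≥0∞} (hf : Measurable f) : ∫⁻ ω, f (ω 0) ∂P μ = ∫⁻ s, f s ∂μ := by
  refine (lintegral_comp_prefix_eq_lintegral_finDist hP hμ 0
    (F := fun x : Fin (0 + 1) → S => f (x 0)) (by fun_prop)).trans ?_
  rw [finDist]
  exact lintegral_map (f := fun x : Fin (0 + 1) → S => f (x 0)) (by fun_prop) (by fun_prop)

variable [IsSFiniteKernel κ]

lemma lintegral_mul_comp_eval_succ (hP : IsMarkovMeasureFamily κ P) (hμ : IsProbabilityMeasure μ)
    {a n : ℕ} (han : a ≤ n) {h g : S → ℝ≥0∞} (hh : Measurable h) (hg : Measurable g) :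
    ∫⁻ ω, h (ω a) * g (ω (n + 1)) ∂P μ = ∫⁻ ω, h (ω a) * markovOp κ g (ω n) ∂P μ := by
  have hF : Measurable fun x : Fin (n + 2) → S => h (x ⟨a, by omega⟩) * g (x (Fin.last _)) :=
    (hh.comp (measurable_pi_apply _)).mul (hg.comp (measurable_pi_apply _))
  have hG : Measurable fun x : Fin (n + 1) → S =>
      h (x ⟨a, by omega⟩) * markovOp κ g (x (Fin.last _)) :=
    (hh.comp (measurable_pi_apply _)).mul (hg.lintegral_kernel.comp (measurable_pi_apply _))
  refine (lintegral_comp_prefix_eq_lintegral_finDist hP hμ (n + 1) hF).trans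
    (Eq.trans ?_ (lintegral_comp_prefix_eq_lintegral_finDist hP hμ n hG).symm)
  rw [lintegral_finDist_succ κ μ n hF]
  refine lintegral_congr fun x => ?_
  have hcast : (⟨a, by omega⟩ : Fin (n + 2)) = Fin.castSucc ⟨a, by omega⟩ := rfl
  simp only [hcast, Fin.snoc_castSucc, Fin.snoc_last]
  exact lintegral_const_mul _ hg

lemma lintegral_mul_comp_eval_add (hP : IsMarkovMeasureFamily κ P) (hμ : IsProbabilityMeasure μ)
    (a m : ℕ) {h g : S → ℝ≥0∞} (hh : Measurable h) (hg : Measurable g) :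
    ∫⁻ ω, h (ω a) * g (ω (a + m)) ∂P μ = ∫⁻ ω, h (ω a) * (markovOp κ)^[m] g (ω a) ∂P μ := by
  induction m generalizing g with
  | zero => rfl
  | succ m ih =>
    rw [← add_assoc, lintegral_mul_comp_eval_succ hP hμ (Nat.le_add_right a m) hh hg,
      ih (g := markovOp κ g) hg.lintegral_kernel, Function.iterate_succ_apply]

lemma markovOp_iterate_indicator_eq_zero (hP : IsMarkovMeasureFamily κ P) {B : Set S}
    (hB : MeasurableSet B) {s : S} (hs : s ∈ avoidSet P B) (m : ℕ) :
    (markovOp κ)^[m] (B.indicator 1) s = 0 := by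
  have hg : Measurable ((markovOp κ)^[m] (B.indicator 1)) :=
    measurable_markovOp_iterate κ m (measurable_one.indicator hB)
  have hδ : IsProbabilityMeasure (Measure.dirac s) := inferInstance
  have hmarkov := lintegral_mul_comp_eval_add hP hδ 0 m measurable_one
    (measurable_one.indicator hB)
  simp only [Pi.one_apply, one_mul, zero_add] at hmarkov
  have hvisit : P (Measure.dirac s) {ω | ω m ∈ B} = 0 :=
    measure_mono_null (t := FEv B) (fun ω hω => ⟨m, hω⟩) hs
  calc (markovOp κ)^[m] (B.indicator 1) s
      = ∫⁻ ω, (markovOp κ)^[m] (B.indicator 1) (ω 0) ∂P (Measure.dirac s) := by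
        rw [lintegral_comp_eval_zero hP hδ hg, lintegral_dirac' s hg]
    _ = 1 * P (Measure.dirac s) {ω | ω m ∈ B} := by
        rw [← hmarkov]; exact lintegral_indicator_const_comp (measurable_pi_apply m) hB 1
    _ = 0 := by rw [hvisit, mul_zero]

lemma measure_eval_mem_avoidSet_and_eval_add_mem_eq_zero (hP : IsMarkovMeasureFamily κ P)
    (hμ : IsProbabilityMeasure μ) {B : Set S} (hB : MeasurableSet B) (a m : ℕ) :
    P μ {ω | ω a ∈ avoidSet P B ∧ ω (a + m) ∈ B} = 0 := by
  set g := (markovOp κ)^[m] (B.indicator 1)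
  have hg : Measurable g := measurable_markovOp_iterate κ m (measurable_one.indicator hB)
  -- `avoidSet P B` need not be measurable; the zero set of `g` is, and contains it
  set Z := g ⁻¹' {0}
  have hZ : MeasurableSet Z := hg (measurableSet_singleton 0)
  set E : Set (ℕ → S) := {ω | ω a ∈ Z ∧ ω (a + m) ∈ B}
  have hE : MeasurableSet E :=
    (hZ.preimage (measurable_pi_apply a)).inter (hB.preimage (measurable_pi_apply (a + m)))
  refine measure_mono_null (t := E) (fun ω ⟨ha, hb⟩ =>
    ⟨markovOp_iterate_indicator_eq_zero hP hB ha m, hb⟩) ?_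
  calc P μ E
      = ∫⁻ ω, Z.indicator 1 (ω a) * B.indicator 1 (ω (a + m)) ∂P μ := by
        rw [← lintegral_indicator_one hE]
        refine lintegral_congr fun ω => ?_
        by_cases h₁ : ω a ∈ Z <;> by_cases h₂ : ω (a + m) ∈ B <;> simp [E, h₁, h₂]
    _ = ∫⁻ ω, Z.indicator 1 (ω a) * g (ω a) ∂P μ :=
        lintegral_mul_comp_eval_add hP hμ a m (measurable_one.indicator hZ)
          (measurable_one.indicator hB)
    _ = 0 := by
        have hzero : ∀ s, Z.indicator 1 s * g s = 0 := fun s => by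
          by_cases hs : s ∈ Z
          · simp [hs, show g s = 0 from hs]
          · simp [hs]
        simp only [hzero, lintegral_zero]

end MarkovProperty

lemma measurableSet_FLe {B : Set S} (hB : MeasurableSet B) (n : ℕ) : MeasurableSet (FLe n B) := by
  have hunion : FLe n B = ⋃ k ≤ n, (fun ω : ℕ → S => ω k) ⁻¹' B := by
    ext ω
    simp [FLe]
  rw [hunion]
  exact .biUnion (to_countable _) fun k _ => hB.preimage (measurable_pi_apply k)

lemma monotone_FLe_union_UntilLe {α : Type*} (B' B A : Set α) :
    Monotone fun n => FLe n B ∪ UntilLe n B' A := by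
  rintro n n' hn ω (⟨k, hk, hkB⟩ | ⟨k, hk, hkA, hbefore⟩)
  · exact .inl ⟨k, hk.trans hn, hkB⟩
  · exact .inr ⟨k, hk.trans hn, hkA, hbefore⟩

lemma iUnion_FLe_union_UntilLe {α : Type*} (B' B A : Set α) :
    ⋃ n, (FLe n B ∪ UntilLe n B' A) = FEv B ∪ Until B' A := by
  ext ω
  simp only [mem_iUnion, mem_union]
  constructor
  · rintro ⟨n, ⟨k, -, hkB⟩ | ⟨k, -, hkA, hbefore⟩⟩
    exacts [.inl ⟨k, hkB⟩, .inr ⟨k, hkA, hbefore⟩]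
  · rintro (⟨k, hkB⟩ | ⟨k, hkA, hbefore⟩)
    exacts [⟨k, .inl ⟨k, le_rfl, hkB⟩⟩, ⟨k, .inr ⟨k, le_rfl, hkA, hbefore⟩⟩]

lemma FEv_union_FEv_subset_FEv_union_Until {α : Type*} (B A : Set α) :
    FEv B ∪ FEv A ⊆ FEv B ∪ Until Bᶜ A := by
  rintro ω (hB | ⟨k, hkA⟩)
  · exact .inl hB
  · by_cases hB : ω ∈ FEv B
    · exact .inl hB
    · exact .inr ⟨k, hkA, fun j _ hjB => hB ⟨j, hjB⟩⟩

lemma FLe_inter_UntilLe_compl_subset {α : Type*} (n : ℕ) (B A : Set α) :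
    FLe n B ∩ UntilLe n Bᶜ A ⊆ ⋃ a, ⋃ m, {ω | ω a ∈ A ∧ ω (a + m) ∈ B} := by
  rintro ω ⟨⟨k, -, hkB⟩, ⟨a, -, haA, hbefore⟩⟩
  have hak : a ≤ k := not_lt.1 fun hka => hbefore k hka hkB
  exact mem_iUnion₂.2 ⟨a, k - a, haA, by rwa [Nat.add_sub_cancel' hak]⟩

/-- If the STS is decisive w.r.t. `B`, then `p^Yes_n + p^No_n → 1`. -/
theorem decisive_pYes_add_pNo_tendsto_one
    (κ : Kernel S S) [IsMarkovKernel κ]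
    (P : Measure S → Measure (ℕ → S)) (hP : IsMarkovMeasureFamily κ P)
    (B : Set S) (hB : MeasurableSet B)
    (μ : Measure S) (hμ : IsProbabilityMeasure μ)
    (hdec : Decisive P B) :
    Tendsto (fun n => P μ (FLe n B) + P μ (UntilLe n Bᶜ (avoidSet P B))) atTop (nhds 1) := by
  have : IsProbabilityMeasure (P μ) := (hP μ hμ).1
  have hdisjoint : ∀ n, P μ (FLe n B ∩ UntilLe n Bᶜ (avoidSet P B)) = 0 := fun n =>
    measure_mono_null (FLe_inter_UntilLe_compl_subset n _ _) <| measure_iUnion_null fun a =>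
      measure_iUnion_null fun m => measure_eval_mem_avoidSet_and_eval_add_mem_eq_zero hP hμ hB a m
  have hadd : ∀ n, P μ (FLe n B) + P μ (UntilLe n Bᶜ (avoidSet P B)) =
      P μ (FLe n B ∪ UntilLe n Bᶜ (avoidSet P B)) := fun n => by
    rw [← measure_union_add_inter' (measurableSet_FLe hB n), hdisjoint n, add_zero]
  have hlimit : P μ (FEv B ∪ Until Bᶜ (avoidSet P B)) = 1 :=
    le_antisymm prob_le_one (hdec μ hμ ▸ measure_mono (FEv_union_FEv_subset_FEv_union_Until _ _))
  have hcont := tendsto_measure_iUnion_atTop (μ := P μ)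
    (monotone_FLe_union_UntilLe Bᶜ B (avoidSet P B))
  rw [iUnion_FLe_union_UntilLe, hlimit] at hcont
  simp only [hadd]
  exact hcont

end STS
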